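/- Generalized Bregman divergence identity for the FedDualAvg shadow sequence: under Assumption A1, with unit server learning rate η_s = 1, for any w ∈ dom ψ, any round r, and any local step k ∈ {0,…,K−1}, it holds exactly that D̃_{h_{r,k+1}}(w, z̄_{r,k+1}) = D̃_{h_{r,k}}(w, z̄_{r,k}) − D̃_{h_{r,k}}(ŵ_{r,k+1}, z̄_{r,k}) − η_c (ψ(ŵ_{r,k+1}) − ψ(w)) − η_c ⟨(1/M) ∑_{m=1}^{M} ∇f(w_{r,k}^m; ξ_{r,k}^m), ŵ_{r,k+1} − w⟩. -/

import Mathlib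

/-!
One local step of FedDualAvg raises the coefficient of `ψ` in `h_{r,k}` by `η_c` and moves
the shadow dual point `z̄` by `-η_c` times the averaged stochastic gradient. The claimed
identity is then an instance of a three-point identity for the generalized Bregman
divergence of `h + η ψ`, valid for every dual point, step and direction: after expanding
`D̃`, the `h` and `ψ` values at the old retrieval point `∇h_{r,k}^*(z̄_{r,k})` cancel.
-/

open MeasureTheory ProbabilityTheory Filter
open scoped RealInnerProductSpace BigOperators Topology

noncomputable section

/-- `ℝ^d` with its inner product structure. -/
abbrev Vec (d : ℕ) := EuclideanSpace ℝ (Fin d)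

/-- The dual norm `‖z‖_* = sup { ⟨z, w⟩ : ‖w‖ ≤ 1 }` of a primal norm `pn`. -/
def dualNorm {d : ℕ} (pn : Vec d → ℝ) (z : Vec d) : ℝ :=
  sSup ((fun w => ⟪z, w⟫) '' {w | pn w ≤ 1})

/-- The Federated Composite Optimization problem together with Assumption A1:
the objective is `Φ(w) = (1/M) ∑_m E_{ξ ∼ D_m} f(w; ξ) + ψ(w)`.  The extended-valued
convex functions `ψ` and `h` are represented by their (finite, real) values on their
effective domains `domψ`, `domh` (they are `+∞` outside). -/
structure FCO (d M : ℕ) (X : Type) [MeasurableSpace X] where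
  /-- the norm `‖·‖` with respect to which smoothness and strong convexity are measured -/
  pnorm : Vec d → ℝ
  pnorm_nonneg : ∀ w, 0 ≤ pnorm w
  pnorm_eq_zero : ∀ w, pnorm w = 0 ↔ w = 0
  pnorm_smul : ∀ (a : ℝ) (w : Vec d), pnorm (a • w) = |a| * pnorm w
  pnorm_triangle : ∀ u w, pnorm (u + w) ≤ pnorm u + pnorm w
  /-- the composite (regularizer) part `ψ` -/
  ψ : Vec d → ℝ
  domψ : Set (Vec d)
  domψ_nonempty : domψ.Nonempty
  domψ_closed : IsClosed domψ
  domψ_convex : Convex ℝ domψ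
  ψ_convex : ConvexOn ℝ domψ ψ
  ψ_lsc : LowerSemicontinuousOn ψ domψ
  /-- the distance generating function `h`, a Legendre function, `1`-strongly convex
  w.r.t. `pnorm`, with `dom h ⊇ dom ψ` -/
  h : Vec d → ℝ
  domh : Set (Vec d)
  domh_sub : domψ ⊆ domh
  domh_convex : Convex ℝ domh
  h_lsc : LowerSemicontinuousOn h domh
  h_strictConvex : StrictConvexOn ℝ domh h
  gradh : Vec d → Vec d
  h_diff : ∀ w ∈ interior domh, HasGradientAt h (gradh w) w
  h_esssmooth : ∀ u : ℕ → Vec d, (∀ n, u n ∈ interior domh) →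
    ∀ x ∈ frontier domh, Tendsto u atTop (nhds x) →
      Tendsto (fun n => ‖gradh (u n)‖) atTop atTop
  h_strongConvex : ∀ u ∈ domh, ∀ v ∈ domh, ∀ a b : ℝ, 0 ≤ a → 0 ≤ b → a + b = 1 →
    h (a • u + b • v) ≤ a * h u + b * h v - a * b / 2 * pnorm (u - v) ^ 2
  /-- the smoothness constant -/
  L : ℝ
  L_nonneg : 0 ≤ L
  /-- the per-sample loss `f(·; ξ)` and its gradient -/
  f : Vec d → X → ℝ
  gradf : Vec d → X → Vec d
  f_convex : ∀ x : X, ConvexOn ℝ Set.univ fun w => f w x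
  f_diff : ∀ x : X, ∀ w ∈ domψ, HasGradientAt (fun w => f w x) (gradf w x) w
  f_smooth : ∀ x : X, ∀ w ∈ domψ, ∀ u ∈ domψ,
    f u x ≤ f w x + ⟪gradf w x, u - w⟫ + L / 2 * pnorm (u - w) ^ 2
  /-- the client distributions `D_1, …, D_M` -/
  D : Fin M → Measure X
  D_prob : ∀ m, IsProbabilityMeasure (D m)
  /-- the variance bound `σ²` on the stochastic gradients (in the dual norm) -/
  σ : ℝ
  σ_nonneg : 0 ≤ σ
  variance_bound : ∀ m : Fin M, ∀ w ∈ domψ,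
    ∫ x, dualNorm pnorm (gradf w x - ∫ x', gradf w x' ∂D m) ^ 2 ∂D m ≤ σ ^ 2
  /-- the optimum `w⋆` of `Φ` -/
  wstar : Vec d
  wstar_mem : wstar ∈ domψ
  wstar_opt : ∀ u ∈ domψ,
    (M : ℝ)⁻¹ * ∑ m, (∫ x, f wstar x ∂D m) + ψ wstar ≤
      (M : ℝ)⁻¹ * ∑ m, (∫ x, f u x ∂D m) + ψ u

namespace FCO

variable {d M : ℕ} {X : Type} [MeasurableSpace X] (S : FCO d M X)

/-- The client objective `F_m(w) = E_{ξ ∼ D_m} f(w; ξ)`. -/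
def Fm (m : Fin M) (w : Vec d) : ℝ := ∫ x, S.f w x ∂S.D m

/-- The gradient `∇F_m(w)`. -/
def gradFm (m : Fin M) (w : Vec d) : Vec d := ∫ x, S.gradf w x ∂S.D m

/-- The smooth part `F(w) = (1/M) ∑_m F_m(w)`. -/
def Favg (w : Vec d) : ℝ := (M : ℝ)⁻¹ * ∑ m, S.Fm m w

/-- The gradient `∇F(w)`. -/
def gradFavg (w : Vec d) : Vec d := (M : ℝ)⁻¹ • ∑ m, S.gradFm m w

/-- The composite objective `Φ = F + ψ`. -/
def Φ (w : Vec d) : ℝ := S.Favg w + S.ψ w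

/-- The Bregman divergence `D_h(u, v) = h(u) − h(v) − ⟨∇h(v), u − v⟩`. -/
def Dh (u v : Vec d) : ℝ := S.h u - S.h v - ⟪S.gradh v, u - v⟫

/-- The dual norm `‖·‖_*`. -/
def dnorm (z : Vec d) : ℝ := dualNorm S.pnorm z

end FCO

/-- One run of the `FedDualAvg` algorithm with unit server learning rate `η_s = 1`:
`K` local steps per round, `R` rounds, client learning rate `ηc`, with all `M` clients
participating in every round.  The map `T η` is the primal retrieval map
`∇(h + η ψ)^*`, characterized as the argmin of `w ↦ ⟨−z, w⟩ + h(w) + η ψ(w)`. -/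
structure FDA (d M K R : ℕ) {X : Type} [MeasurableSpace X] (S : FCO d M X)
    (Ω : Type) [MeasureSpace Ω] where
  /-- the client learning rate -/
  ηc : ℝ
  ηc_pos : 0 < ηc
  /-- the initialization -/
  w0 : Vec d
  w0_mem : w0 ∈ S.domψ
  /-- `T η z = ∇(h + η ψ)^*(z)` -/
  T : ℝ → Vec d → Vec d
  T_mem : ∀ (η : ℝ) (z : Vec d), 0 ≤ η → T η z ∈ S.domψ
  T_argmin : ∀ (η : ℝ) (z : Vec d), 0 ≤ η → ∀ u ∈ S.domψ,
    S.h (T η z) + η * S.ψ (T η z) - ⟪z, T η z⟫ ≤ S.h u + η * S.ψ u - ⟪z, u⟫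
  /-- the i.i.d. samples `ξ_{r,k}^m ∼ D_m` -/
  ξ : ℕ → ℕ → Fin M → Ω → X
  ξ_meas : ∀ r k m, Measurable (ξ r k m)
  ξ_law : ∀ r k m, Measure.map (ξ r k m) (ℙ : Measure Ω) = S.D m
  ξ_indep : iIndepFun (m := fun _ => ‹MeasurableSpace X›)
    (fun p : ℕ × ℕ × Fin M => ξ p.1 p.2.1 p.2.2) (ℙ : Measure Ω)
  /-- the dual iterates `z_{r,k}^m` -/
  z : ℕ → ℕ → Fin M → Ω → Vec d
  z_init : ∀ m ω, z 0 0 m ω = S.gradh w0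
  z_update : ∀ r k, k < K → ∀ m ω,
    z r (k + 1) m ω =
      z r k m ω - ηc • S.gradf (T (ηc * ((r * K + k : ℕ) : ℝ)) (z r k m ω)) (ξ r k m ω)
  z_server : ∀ r m ω, z (r + 1) 0 m ω = (M : ℝ)⁻¹ • ∑ m', z r K m' ω

namespace FDA

variable {d M K R : ℕ} {X : Type} [MeasurableSpace X] {S : FCO d M X}
  {Ω : Type} [MeasureSpace Ω] (A : FDA d M K R S Ω)

/-- The coefficient `η_c (rK + k)` of `ψ` in `h_{r,k} = h + η_c (rK + k) ψ`. -/
def coef (r k : ℕ) : ℝ := A.ηc * ((r * K + k : ℕ) : ℝ)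

/-- The primal iterates `w_{r,k}^m = ∇h_{r,k}^*(z_{r,k}^m)`. -/
def w (r k : ℕ) (m : Fin M) (ω : Ω) : Vec d := A.T (A.coef r k) (A.z r k m ω)

/-- The shadow dual sequence `z̄_{r,k} = (1/M) ∑_m z_{r,k}^m`. -/
def zbar (r k : ℕ) (ω : Ω) : Vec d := (M : ℝ)⁻¹ • ∑ m, A.z r k m ω

/-- The shadow primal sequence `ŵ_{r,k} = ∇h_{r,k}^*(z̄_{r,k})`. -/
def what (r k : ℕ) (ω : Ω) : Vec d := A.T (A.coef r k) (A.zbar r k ω)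

/-- The σ-algebra `F_{r,k}` generated by all `z_{ρ,κ}^m` with `ρ < r`, or `ρ = r` and `κ ≤ k`. -/
def filt (r k : ℕ) : MeasurableSpace Ω :=
  ⨆ (p : ℕ × ℕ × Fin M) (_ : p.1 < r ∨ (p.1 = r ∧ p.2.1 ≤ k)),
    MeasurableSpace.comap (A.z p.1 p.2.1 p.2.2) inferInstance

/-- The generalized Bregman divergence `D̃_{h + η ψ}(u, z)`. -/
def tDiv (η : ℝ) (u : Vec d) (zz : Vec d) : ℝ :=
  (S.h u + η * S.ψ u) - (S.h (A.T η zz) + η * S.ψ (A.T η zz)) - ⟪zz, u - A.T η zz⟫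

end FDA

/-- The quadratic form `zᵀ Q z` on `ℝ^d`. -/
def quadForm {d : ℕ} (Q : Matrix (Fin d) (Fin d) ℝ) (z : Vec d) : ℝ :=
  ⟪Matrix.toEuclideanLin Q z, z⟫

/-- The operator (spectral) norm `‖Q‖₂` of a matrix. -/
def matOpNorm {d : ℕ} (Q : Matrix (Fin d) (Fin d) ℝ) : ℝ :=
  ‖Matrix.toEuclideanCLM (𝕜 := ℝ) Q‖

namespace FDA

variable {d M K R : ℕ} {X : Type} [MeasurableSpace X] {S : FCO d M X}
  {Ω : Type} [MeasureSpace Ω] (A : FDA d M K R S Ω)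

theorem tDiv_add_sub_smul (η c : ℝ) (w z g : Vec d) :
    A.tDiv (η + c) w (z - c • g) =
      A.tDiv η w z - A.tDiv η (A.T (η + c) (z - c • g)) z -
        c * (S.ψ (A.T (η + c) (z - c • g)) - S.ψ w) -
        c * ⟪g, A.T (η + c) (z - c • g) - w⟫ := by
  simp only [tDiv, inner_sub_left, inner_sub_right, real_inner_smul_left]
  ring

theorem coef_succ (r k : ℕ) : A.coef r (k + 1) = A.coef r k + A.ηc := by
  simp only [coef]
  push_cast
  ring

theorem zbar_succ {r k : ℕ} (hk : k < K) (ω : Ω) :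
    A.zbar r (k + 1) ω = A.zbar r k ω -
      A.ηc • ((M : ℝ)⁻¹ • ∑ m, S.gradf (A.w r k m ω) (A.ξ r k m ω)) := by
  simp only [zbar, w, coef, A.z_update r k hk, Finset.sum_sub_distrib, ← Finset.smul_sum,
    smul_sub, smul_comm A.ηc]

end FDA

theorem feddualavg_bregman_identity_general
    {d M K R : ℕ} {X : Type} [MeasurableSpace X] {Ω : Type} [MeasureSpace Ω]
    (S : FCO d M X) (A : FDA d M K R S Ω)
    (w : Vec d)
    (r k : ℕ) (hk : k < K) (ω : Ω) :
    A.tDiv (A.coef r (k + 1)) w (A.zbar r (k + 1) ω) =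
      A.tDiv (A.coef r k) w (A.zbar r k ω) -
        A.tDiv (A.coef r k) (A.what r (k + 1) ω) (A.zbar r k ω) -
        A.ηc * (S.ψ (A.what r (k + 1) ω) - S.ψ w) -
        A.ηc * ⟪(M : ℝ)⁻¹ • ∑ m : Fin M, S.gradf (A.w r k m ω) (A.ξ r k m ω),
          A.what r (k + 1) ω - w⟫ := by
  have step := A.tDiv_add_sub_smul (A.coef r k) A.ηc w (A.zbar r k ω)
    ((M : ℝ)⁻¹ • ∑ m, S.gradf (A.w r k m ω) (A.ξ r k m ω))
  rwa [← A.coef_succ, ← A.zbar_succ hk] at step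

/-- Claim: exact generalized Bregman divergence identity for the shadow
sequence of `FedDualAvg`. -/
theorem feddualavg_bregman_identity
    {d M K R : ℕ} {X : Type} [MeasurableSpace X] {Ω : Type} [MeasureSpace Ω]
    [IsProbabilityMeasure (ℙ : Measure Ω)]
    (hM : 0 < M) (hK : 0 < K) (hR : 0 < R)
    (S : FCO d M X) (A : FDA d M K R S Ω)
    (w : Vec d) (hw : w ∈ S.domψ)
    (r k : ℕ) (hr : r < R) (hk : k < K) (ω : Ω) :
    A.tDiv (A.coef r (k + 1)) w (A.zbar r (k + 1) ω) =
      A.tDiv (A.coef r k) w (A.zbar r k ω) -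
        A.tDiv (A.coef r k) (A.what r (k + 1) ω) (A.zbar r k ω) -
        A.ηc * (S.ψ (A.what r (k + 1) ω) - S.ψ w) -
        A.ηc * ⟪(M : ℝ)⁻¹ • ∑ m : Fin M, S.gradf (A.w r k m ω) (A.ξ r k m ω),
          A.what r (k + 1) ω - w⟫ :=
  feddualavg_bregman_identity_general S A w r k hk ω
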